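/- Let ρ be a weak contrast function on U and define h, C and Γ from ρ as in the context. Assume C is totally symmetric. Then for every x ∈ U and all v, w, u ∈ ℝⁿ: −ρ[vw|u](x) = Γ x v w u − (1/2) · C x v w u, and −ρ[u|vw](x) = Γ x v w u + (1/2) · C x v w u. (Paper's Proposition 3.27: the second and third diagonal derivatives of a weak contrast function express the Kossowski pseudo-connection and the cubic tensor.) -/

import Mathlib

noncomputable section

open Set

/-- ℝⁿ. -/
abbrev Vn (n : ℕ) : Type := Fin n → ℝ

/-- `ρ[v|w](x) = D²ρ(x,x)[(v,0),(0,w)]`. -/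
def rho2 {n : ℕ} (ρ : Vn n × Vn n → ℝ) (x v w : Vn n) : ℝ :=
  fderiv ℝ (fun q => fderiv ℝ ρ q (0, w)) (x, x) (v, 0)

/-- `ρ[vw|u](x) = D³ρ(x,x)[(v,0),(w,0),(0,u)]`. -/
def rho3L {n : ℕ} (ρ : Vn n × Vn n → ℝ) (x v w u : Vn n) : ℝ :=
  fderiv ℝ (fun q => fderiv ℝ (fun r => fderiv ℝ ρ r (0, u)) q (w, 0)) (x, x) (v, 0)

/-- `ρ[u|vw](x) = D³ρ(x,x)[(u,0),(0,v),(0,w)]`. -/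
def rho3R {n : ℕ} (ρ : Vn n × Vn n → ℝ) (x v w u : Vn n) : ℝ :=
  fderiv ℝ (fun q => fderiv ℝ (fun r => fderiv ℝ ρ r (0, w)) q (0, v)) (x, x) (u, 0)

/-- The metric induced by a weak contrast function: `h x v w = −ρ[v|w](x)`. -/
def hcon {n : ℕ} (ρ : Vn n × Vn n → ℝ) (x v w : Vn n) : ℝ := -(rho2 ρ x v w)

/-- The cubic tensor induced by a weak contrast function:
`C x v w u = ρ[vw|u](x) − ρ[u|vw](x)`. -/
def Ccon {n : ℕ} (ρ : Vn n × Vn n → ℝ) (x v w u : Vn n) : ℝ :=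
  rho3L ρ x v w u - rho3R ρ x v w u

/-- The Kossowski pseudo-connection (Levi-Civita expression) of `h`. -/
def Gcon {n : ℕ} (ρ : Vn n × Vn n → ℝ) (x v w u : Vn n) : ℝ :=
  ((1:ℝ)/2) * (fderiv ℝ (fun y => hcon ρ y w u) x v
    + fderiv ℝ (fun y => hcon ρ y u v) x w
    - fderiv ℝ (fun y => hcon ρ y v w) x u)

/-!
By the chain rule along the diagonal and Schwarz symmetry of the second derivative,
`∂ᵥ h(w, u) = -(ρ[vw|u] + ρ[w|vu])`, and `ρ[u|vw]` is symmetric in `v, w`. Substituting into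
the Levi-Civita expression gives `2Γ(v,w,u) = -ρ[vw|u] - ρ[u|vw] + C(u,v,w) - C(w,u,v)`;
the last two terms cancel when `C` is totally symmetric.
-/

open Filter Topology

section Calculus

variable {E F : Type*} [NormedAddCommGroup E] [NormedSpace ℝ E]
  [NormedAddCommGroup F] [NormedSpace ℝ F]

lemma fderiv_fderiv_apply_eq {f : E → F} {p : E} (hf : DifferentiableAt ℝ (fderiv ℝ f) p)
    (a m : E) : fderiv ℝ (fun r => fderiv ℝ f r m) p a = fderiv ℝ (fderiv ℝ f) p a m := by
  rw [fderiv_clm_apply hf (differentiableAt_const m)]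
  simp

lemma fderiv_fderiv_apply_comm {f : E → F} {p : E} (hf : ContDiffAt ℝ 2 f p) (a b : E) :
    fderiv ℝ (fun r => fderiv ℝ f r b) p a = fderiv ℝ (fun r => fderiv ℝ f r a) p b := by
  have hdf : DifferentiableAt ℝ (fderiv ℝ f) p :=
    (hf.fderiv_right (m := 1) le_rfl).differentiableAt one_ne_zero
  rw [fderiv_fderiv_apply_eq hdf, fderiv_fderiv_apply_eq hdf,
    hf.isSymmSndFDerivAt (by simp) a b]

lemma fderiv_comp_diag_apply {g : E × E → F} {x : E} (hg : DifferentiableAt ℝ g (x, x))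
    (v : E) :
    fderiv ℝ (fun y => g (y, y)) x v = fderiv ℝ g (x, x) (v, 0) + fderiv ℝ g (x, x) (0, v) := by
  have hdiag : HasFDerivAt (fun y : E => (y, y))
      ((ContinuousLinearMap.id ℝ E).prod (ContinuousLinearMap.id ℝ E)) x :=
    (hasFDerivAt_id x).prodMk (hasFDerivAt_id x)
  have hcomp : HasFDerivAt (fun y => g (y, y)) _ x :=
    hg.hasFDerivAt.comp (f := fun y => (y, y)) x hdiag
  rw [hcomp.fderiv, ← map_add]
  simp

end Calculus

section DiagonalDerivatives

variable {n : ℕ} {ρ : Vn n × Vn n → ℝ} {x : Vn n}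

lemma rho3R_comm (hρ : ContDiffAt ℝ 3 ρ (x, x)) (v w u : Vn n) :
    rho3R ρ x v w u = rho3R ρ x w v u := by
  have hsymm : (fun q => fderiv ℝ (fun r => fderiv ℝ ρ r (0, w)) q (0, v))
      =ᶠ[𝓝 (x, x)] fun q => fderiv ℝ (fun r => fderiv ℝ ρ r (0, v)) q (0, w) := by
    filter_upwards [hρ.eventually (by simp)] with q hq
    exact fderiv_fderiv_apply_comm (hq.of_le (m := 2) (by norm_num)) _ _
  rw [rho3R, rho3R, hsymm.fderiv_eq]

lemma fderiv_hcon_apply (hρ : ContDiffAt ℝ 3 ρ (x, x)) (v w u : Vn n) :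
    fderiv ℝ (fun y => hcon ρ y w u) x v = -(rho3L ρ x v w u + rho3R ρ x v u w) := by
  set g : Vn n × Vn n → ℝ := fun r => fderiv ℝ ρ r (0, u)
  have hg : ContDiffAt ℝ 2 g (x, x) :=
    (hρ.fderiv_right (m := 2) (by norm_num)).clm_apply contDiffAt_const
  have hG : DifferentiableAt ℝ (fun q => fderiv ℝ g q (w, 0)) (x, x) :=
    ((hg.fderiv_right (m := 1) le_rfl).clm_apply contDiffAt_const).differentiableAt one_ne_zero
  have hswap : fderiv ℝ (fun q => fderiv ℝ g q (w, 0)) (x, x) (0, v) = rho3R ρ x v u w :=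
    fderiv_fderiv_apply_comm hg _ _
  change fderiv ℝ (fun y => -fderiv ℝ g (y, y) (w, 0)) x v = _
  rw [fderiv_fun_neg, neg_apply, fderiv_comp_diag_apply hG, hswap]
  rfl

lemma Gcon_eq (hρ : ContDiffAt ℝ 3 ρ (x, x)) (v w u : Vn n) :
    Gcon ρ x v w u = -(rho3L ρ x v w u + rho3R ρ x v w u) / 2
      + (Ccon ρ x u v w - Ccon ρ x w u v) / 2 := by
  have hR := rho3R_comm hρ
  simp only [Gcon, Ccon, fderiv_hcon_apply hρ]
  linarith [hR v u w, hR w v u, hR u w v]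

end DiagonalDerivatives

theorem statement17_general {n : ℕ} (U : Set (Vn n)) (hUopen : IsOpen U)
    (ρ : Vn n × Vn n → ℝ)
    (hρsmooth : ContDiffOn ℝ (⊤ : ℕ∞) ρ (U ×ˢ U))
    (hCsymm : ∀ x ∈ U, ∀ v w u : Vn n,
      Ccon ρ x v w u = Ccon ρ x w v u ∧ Ccon ρ x v w u = Ccon ρ x v u w) :
    ∀ x ∈ U, ∀ v w u : Vn n,
      -(rho3L ρ x v w u) = Gcon ρ x v w u - ((1:ℝ)/2) * Ccon ρ x v w u ∧
      -(rho3R ρ x v w u) = Gcon ρ x v w u + ((1:ℝ)/2) * Ccon ρ x v w u := by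
  intro x hx v w u
  have hρ : ContDiffAt ℝ 3 ρ (x, x) :=
    (hρsmooth.contDiffAt ((hUopen.prod hUopen).mem_nhds ⟨hx, hx⟩)).of_le
      (WithTop.coe_le_coe.mpr le_top)
  have hC : Ccon ρ x u v w = Ccon ρ x w u v :=
    (hCsymm x hx u v w).2.trans (hCsymm x hx u w v).1
  have hΓ : Gcon ρ x v w u = -(rho3L ρ x v w u + rho3R ρ x v w u) / 2 := by
    rw [Gcon_eq hρ, hC, sub_self, zero_div, add_zero]
  constructor <;> rw [hΓ, Ccon] <;> ring

/-- Paper's Proposition 3.27: for a weak contrast function `ρ` whose induced cubic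
tensor `C` is totally symmetric, the second and third diagonal derivatives of `ρ`
express the Kossowski pseudo-connection and the cubic tensor:
`−ρ[vw|u] = Γ − (1/2)C` and `−ρ[u|vw] = Γ + (1/2)C`. -/
theorem statement17 {n : ℕ} (U : Set (Vn n)) (hUopen : IsOpen U)
    (ρ : Vn n × Vn n → ℝ)
    (hρsmooth : ContDiffOn ℝ (⊤ : ℕ∞) ρ (U ×ˢ U))
    (hρ0 : ∀ x ∈ U, ρ (x, x) = 0)
    (hρ1 : ∀ x ∈ U, fderiv ℝ ρ (x, x) = 0)
    (hCsymm : ∀ x ∈ U, ∀ v w u : Vn n,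
      Ccon ρ x v w u = Ccon ρ x w v u ∧ Ccon ρ x v w u = Ccon ρ x v u w) :
    ∀ x ∈ U, ∀ v w u : Vn n,
      -(rho3L ρ x v w u) = Gcon ρ x v w u - ((1:ℝ)/2) * Ccon ρ x v w u ∧
      -(rho3R ρ x v w u) = Gcon ρ x v w u + ((1:ℝ)/2) * Ccon ρ x v w u :=
  statement17_general U hUopen ρ hρsmooth hCsymm
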